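/- arXiv:1701.07097 — 2 statements merged into one kernel-verified Lean document; each statement's English description precedes it below -/
import Mathlib

section
/- Let O be a complete discrete valuation ring with residue field k and fraction field K of characteristic 0, and let G be a finite group. Let C be a bounded complex of finitely generated projective OG-modules concentrated in degrees r,…,2r whose cohomology over K is concentrated in degree r, i.e. H^i(K⊗C) = 0 for i ≠ r. Suppose moreover that H^i(k⊗C) = 0 for all i > r. Then H^r(C) is a projective OG-module and H^i(C) = 0 for i ≠ r. -/
/-!
Downward induction from the top degree. If the image of `d (i + 1)` is projective, then
`ker d (i + 1)` is a direct summand of `M (i + 1)`, so exactness of `k ⊗ C` makes the reduction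
mod the maximal ideal of `M i → ker d (i + 1)` surjective; by Nakayama `M i → ker d (i + 1)` is
surjective, and its image `ker d (i + 1)` is projective. In degree `r` nothing comes in from
`M (r - 1) = 0`, so `H^r(C) = ker d r`, which is projective because the image of `d r` is.
-/

open Function IsLocalRing

namespace LinearMap

section Projective

variable {R M N : Type*} [Ring R] [AddCommGroup M] [AddCommGroup N] [Module R M] [Module R N]

theorem exists_leftInverse_ker_subtype (g : M →ₗ[R] N) [Module.Projective R (range g)] :
    ∃ p : M →ₗ[R] ker g, p ∘ₗ (ker g).subtype = .id := by
  obtain ⟨s, hs⟩ := g.rangeRestrict.exists_rightInverse_of_surjective g.range_rangeRestrict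
  have hp (x : M) : (LinearMap.id - s ∘ₗ g.rangeRestrict : M →ₗ[R] M) x ∈ ker g := by
    have := congr(Subtype.val ($hs (g.rangeRestrict x)))
    simpa [sub_eq_zero] using this.symm
  refine ⟨codRestrict _ _ hp, ?_⟩
  ext ⟨x, hx⟩
  simp [show g.rangeRestrict x = 0 from Subtype.ext hx]

theorem projective_ker [Module.Projective R M] (g : M →ₗ[R] N) [Module.Projective R (range g)] :
    Module.Projective R (ker g) :=
  have ⟨p, hp⟩ := g.exists_leftInverse_ker_subtype
  .of_split _ p hp

end Projective

section Nakayama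

variable {O M N : Type*} [CommRing O] [IsLocalRing O] [AddCommGroup M] [AddCommGroup N]
  [Module O M] [Module O N]

theorem surjective_of_surjective_baseChange_residueField [Module.Finite O N] (f : M →ₗ[O] N)
    (hf : Surjective (f.baseChange (ResidueField O))) : Surjective f := by
  rw [← range_eq_top, ← IsLocalRing.map_tensorProduct_mk_eq_top, eq_top_iff]
  intro z _
  obtain ⟨w, rfl⟩ := hf z
  obtain ⟨x, rfl⟩ := TensorProduct.mk_surjective O M (ResidueField O) residue_surjective w
  exact ⟨f x, mem_range_self f x, rfl⟩

end Nakayama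

theorem _root_.Function.Exact.surjective_comp_of_leftInverse {A B C D : Type*} [Zero C]
    {F : A → B} {G : B → C} (h : Exact F G) {ι : D → B} {π : B → D} (hι : ∀ z, G (ι z) = 0)
    (hπ : LeftInverse π ι) : Surjective (π ∘ F) := fun z ↦
  have ⟨w, hw⟩ := (h (ι z)).mp (hι z)
  ⟨w, by simp [hw, hπ z]⟩

section ResidueField

variable {O R M₁ M₂ M₃ : Type*} [CommRing O] [IsLocalRing O] [Ring R] [Algebra O R]
  [AddCommGroup M₁] [AddCommGroup M₂] [AddCommGroup M₃] [Module R M₁] [Module R M₂] [Module R M₃]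
  [Module O M₁] [Module O M₂] [Module O M₃]
  [IsScalarTower O R M₁] [IsScalarTower O R M₂] [IsScalarTower O R M₃]

theorem exact_of_exact_baseChange_residueField [Module.Finite O M₂]
    (f : M₁ →ₗ[R] M₂) (g : M₂ →ₗ[R] M₃) (hgf : g ∘ₗ f = 0) [Module.Projective R (range g)]
    (h : Exact ((f.restrictScalars O).baseChange (ResidueField O))
      ((g.restrictScalars O).baseChange (ResidueField O))) :
    Exact f g := by
  obtain ⟨p, hp⟩ := g.exists_leftInverse_ker_subtype
  let f' : M₁ →ₗ[R] ker g := f.codRestrict _ fun x ↦ congr($hgf x)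
  have : Module.Finite O (ker g) :=
    .of_surjective (p.restrictScalars O) fun z ↦ ⟨z, congr($hp z)⟩
  have hf' : Surjective f' := by
    let k := ResidueField O
    let ι := (ker g).subtype.restrictScalars O
    let π := p.restrictScalars O
    have hpf : π ∘ₗ f.restrictScalars O = f'.restrictScalars O := by
      ext x; exact congr($hp (f' x))
    have hsurj := h.surjective_comp_of_leftInverse (ι := ι.baseChange k) (π := π.baseChange k)
      (fun z ↦ by
        rw [← comp_apply, ← baseChange_comp, show g.restrictScalars O ∘ₗ ι = 0 by ext; simp [ι],
          baseChange_zero, zero_apply])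
      (fun z ↦ by
        rw [← comp_apply, ← baseChange_comp, show π ∘ₗ ι = .id from congr(restrictScalars O $hp),
          baseChange_id, id_apply])
    rw [← coe_comp, ← baseChange_comp, hpf] at hsurj
    exact surjective_of_surjective_baseChange_residueField _ hsurj
  rw [exact_iff, show f = (ker g).subtype ∘ₗ f' from rfl, range_comp, range_eq_top.mpr hf',
    Submodule.map_top, Submodule.range_subtype]

end ResidueField

end LinearMap

open LinearMap

section Complex

variable {O R : Type*} [CommRing O] [IsLocalRing O] [Ring R] [Algebra O R] {M : ℤ → Type*}
  [∀ i, AddCommGroup (M i)] [∀ i, Module R (M i)] [∀ i, Module O (M i)]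
  [∀ i, IsScalarTower O R (M i)] [∀ i, Module.Finite O (M i)] [∀ i, Module.Projective R (M i)]
  (d : ∀ i, M i →ₗ[R] M (i + 1))

theorem projective_range_of_exact_baseChange_residueField
    (hdd : ∀ i x, d (i + 1) (d i x) = 0) {r N : ℤ}
    (hN : ∀ i, N < i → Subsingleton (M i))
    (hk : ∀ i, r < i + 1 → Exact ((d i).restrictScalars O |>.baseChange (ResidueField O))
      ((d (i + 1)).restrictScalars O |>.baseChange (ResidueField O))) :
    ∀ i, r ≤ i → Module.Projective R (range (d i)) := by
  have of_top (i) (hi : N ≤ i) : Module.Projective R (range (d i)) :=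
    have := hN (i + 1) (by omega)
    inferInstance
  have of_succ (i) (hi : r ≤ i) (h : Module.Projective R (range (d (i + 1)))) :
      Module.Projective R (range (d i)) :=
    have hexact := exact_of_exact_baseChange_residueField (d i) (d (i + 1))
      (LinearMap.ext (hdd i)) (hk i (by omega))
    have := (d (i + 1)).projective_ker
    .of_equiv (LinearEquiv.ofEq _ _ hexact.linearMap_ker_eq)
  intro i hi
  rcases le_total N i with h | h
  · exact of_top i h
  induction i, h using Int.leInductionDown with
  | base => exact of_top N le_rfl
  | pred n hn ih => exact of_succ (n - 1) hi (by rw [sub_add_cancel]; exact ih (by omega))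

end Complex

theorem stmt5_general (O : Type) [CommRing O] [IsDomain O] [IsDiscreteValuationRing O]
    (G : Type) [Group G] [Finite G]
    (r : ℤ)
    (M : ℤ → Type) [∀ i, AddCommGroup (M i)] [∀ i, Module (MonoidAlgebra O G) (M i)]
    [∀ i, Module O (M i)] [∀ i, IsScalarTower O (MonoidAlgebra O G) (M i)]
    (d : ∀ i : ℤ, M i →ₗ[MonoidAlgebra O G] M (i + 1))
    (hdd : ∀ (i : ℤ) (x : M i), d (i + 1) (d i x) = 0)
    (hconc : ∀ i : ℤ, (i < r ∨ 2 * r < i) → Subsingleton (M i))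
    (hfg : ∀ i : ℤ, Module.Finite (MonoidAlgebra O G) (M i))
    (hproj : ∀ i : ℤ, Module.Projective (MonoidAlgebra O G) (M i))
    -- `H^i(k ⊗ C) = 0` for `i > r`:
    (hk : ∀ i : ℤ, r < i + 1 →
      Function.Exact
        (LinearMap.baseChange (IsLocalRing.ResidueField O) ((d i).restrictScalars O))
        (LinearMap.baseChange (IsLocalRing.ResidueField O) ((d (i + 1)).restrictScalars O))) :
    ∀ i : ℤ,
      (i + 1 = r → Module.Projective (MonoidAlgebra O G)
        (↥(LinearMap.ker (d (i + 1))) ⧸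
          Submodule.comap (LinearMap.ker (d (i + 1))).subtype (LinearMap.range (d i)))) ∧
      (i + 1 ≠ r → Function.Exact (d i) (d (i + 1))) := by
  have (i : ℤ) : Module.Finite O (M i) := have := hfg i; .trans (MonoidAlgebra O G) (M i)
  have hrange := projective_range_of_exact_baseChange_residueField d hdd
    (fun i hi ↦ hconc i (.inr hi)) hk
  intro i
  constructor
  · intro hi
    have := hconc i (.inl (by omega))
    have := hrange (i + 1) hi.ge
    have := (d (i + 1)).projective_ker
    refine .of_equiv (Submodule.quotEquivOfEqBot _ ?_).symm
    rw [range_eq_bot.mpr (Subsingleton.elim _ _), Submodule.comap_bot, Submodule.ker_subtype]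
  · intro hi
    rcases hi.lt_or_gt with hlt | hgt
    · have := hconc (i + 1) (.inl hlt)
      intro y
      rw [Subsingleton.elim y 0]
      exact ⟨fun _ ↦ ⟨0, map_zero _⟩, fun _ ↦ map_zero _⟩
    · have := hrange (i + 1) hgt.le
      exact exact_of_exact_baseChange_residueField (O := O) _ _ (LinearMap.ext (hdd i)) (hk i hgt)

/-- Let `O` be a complete DVR with residue field `k` and fraction field `K`
of characteristic `0`, and `G` a finite group.  Let `C = (M, d)` be a bounded complex of
finitely generated projective `OG`-modules concentrated in degrees `r, …, 2r`, whose
cohomology over `K` is concentrated in degree `r` and whose mod-`ℓ` cohomology vanishes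
in all degrees `> r`.  Then `H^r(C)` is a projective `OG`-module and `H^i(C) = 0` for
`i ≠ r`.  (Here `H^{i+1}` is expressed via exactness of `d i, d (i+1)`, resp. as the
quotient `ker (d (i+1)) / im (d i)`; `K ⊗ C` and `k ⊗ C` are the base changes of the
underlying `O`-complex.) -/
theorem stmt5 (O : Type) [CommRing O] [IsDomain O] [IsDiscreteValuationRing O]
    [IsAdicComplete (IsLocalRing.maximalIdeal O) O] [CharZero O]
    (G : Type) [Group G] [Finite G]
    (r : ℤ) (hr : 0 ≤ r)
    (M : ℤ → Type) [∀ i, AddCommGroup (M i)] [∀ i, Module (MonoidAlgebra O G) (M i)]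
    [∀ i, Module O (M i)] [∀ i, IsScalarTower O (MonoidAlgebra O G) (M i)]
    (d : ∀ i : ℤ, M i →ₗ[MonoidAlgebra O G] M (i + 1))
    (hdd : ∀ (i : ℤ) (x : M i), d (i + 1) (d i x) = 0)
    (hconc : ∀ i : ℤ, (i < r ∨ 2 * r < i) → Subsingleton (M i))
    (hfg : ∀ i : ℤ, Module.Finite (MonoidAlgebra O G) (M i))
    (hproj : ∀ i : ℤ, Module.Projective (MonoidAlgebra O G) (M i))
    -- `H^i(K ⊗ C) = 0` for `i ≠ r`:
    (hK : ∀ i : ℤ, i + 1 ≠ r →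
      Function.Exact
        (LinearMap.baseChange (FractionRing O) ((d i).restrictScalars O))
        (LinearMap.baseChange (FractionRing O) ((d (i + 1)).restrictScalars O)))
    -- `H^i(k ⊗ C) = 0` for `i > r`:
    (hk : ∀ i : ℤ, r < i + 1 →
      Function.Exact
        (LinearMap.baseChange (IsLocalRing.ResidueField O) ((d i).restrictScalars O))
        (LinearMap.baseChange (IsLocalRing.ResidueField O) ((d (i + 1)).restrictScalars O))) :
    ∀ i : ℤ,
      (i + 1 = r → Module.Projective (MonoidAlgebra O G)
        (↥(LinearMap.ker (d (i + 1))) ⧸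
          Submodule.comap (LinearMap.ker (d (i + 1))).subtype (LinearMap.range (d i)))) ∧
      (i + 1 ≠ r → Function.Exact (d i) (d (i + 1))) :=
  stmt5_general O G r M d hdd hconc hfg hproj hk
end

section
/- Let T be a Brauer tree with multiplicity m and let d > 1 divide m. The unfolded tree ∧^d T carries an automorphism σ of order d fixing the new exceptional vertex and permuting the d copies of T∖{v_x} cyclically, and the quotient planar tree (∧^d T)/⟨σ⟩ is isomorphic to T as a planar tree with exceptional vertex. -/
/-- The combinatorial data of a Brauer tree: a (planar) tree with a cyclic ordering
`succ v` of the edges at each vertex `v`, a multiplicity `mult`, and an exceptional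
vertex `exc`. -/
structure BrauerTreeC where
  Vtx : Type
  Edge : Type
  ends : Edge → Vtx × Vtx
  succ : Vtx → Edge → Edge
  mult : ℕ
  exc : Vtx

namespace BrauerTreeC

/-- The unfolding `∧^d T` of a Brauer tree `T`: the exceptional vertex becomes `none`,
its complement is replaced by `d` copies of `T ∖ {v_x}`, each edge of `T` acquires `d`
copies, and the cyclic ordering at the new exceptional vertex is
`(l₁,0),…,(l₁,d−1),(l₂,0),…,(l_r,d−1)`.  The multiplicity becomes `mult / d`. -/
noncomputable def Unfold (T : BrauerTreeC) (d : ℕ) [NeZero d] : BrauerTreeC := by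
  classical
  exact {
  Vtx := Option ({v : T.Vtx // v ≠ T.exc} × Fin d)
  Edge := T.Edge × Fin d
  ends := fun ei =>
    ((if h : (T.ends ei.1).1 = T.exc then none else some (⟨(T.ends ei.1).1, h⟩, ei.2)),
     (if h : (T.ends ei.1).2 = T.exc then none else some (⟨(T.ends ei.1).2, h⟩, ei.2)))
  succ := fun ov ei =>
    match ov with
    | none => if ((ei.2 : ℕ) + 1 < d) then (ei.1, ei.2 + 1) else (T.succ T.exc ei.1, 0)
    | some p => (T.succ p.1.1 ei.1, ei.2)
  mult := T.mult / d
  exc := none }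

end BrauerTreeC

/-! σ is the rotation `(x, i) ↦ (x, i + 1)` of the copy index in `Fin d`; since `1` generates
`Fin d`, it has order `d` and its orbits are exactly the fibres of forgetting the copy index,
which is the quotient map onto `T`. Incidence and the cyclic orders at non-exceptional vertices
do not involve the copy index at all. At the new exceptional vertex the cyclic order runs through
`(l, 0), …, (l, d - 1)` and then carries to `(succ l, 0)`, so its `d`-th power is `succ` at `v_x`
in every copy. -/

open Function

theorem Option.map_iterate {α : Type*} (f : α → α) (n : ℕ) :
    (Option.map f)^[n] = Option.map f^[n] := by
  induction n with
  | zero => exact Option.map_id.symm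
  | succ n ih => rw [iterate_succ', ih, iterate_succ', Option.map_comp_map]

theorem Function.bijective_of_iterate_eq_id {α : Type*} {f : α → α} {n : ℕ} (hn : n ≠ 0)
    (h : f^[n] = id) : Bijective f := by
  obtain ⟨k, rfl⟩ := Nat.exists_eq_succ_of_ne_zero hn
  refine bijective_iff_has_inverse.2 ⟨f^[k], fun x => ?_, fun x => ?_⟩
  · rw [← iterate_succ_apply, h, id]
  · rw [← iterate_succ_apply' f k, h, id]

section Carry

variable {E : Type*} {d : ℕ} {f : E × Fin d → E × Fin d}

theorem iterate_apply_of_add_lt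
    (hstep : ∀ e (i : Fin d) (h : i.val + 1 < d), f (e, i) = (e, ⟨i + 1, h⟩))
    (e : E) (i : Fin d) : ∀ j (h : i.val + j < d), f^[j] (e, i) = (e, ⟨i + j, h⟩)
  | 0, _ => rfl
  | j + 1, h => by
    rw [iterate_succ_apply', iterate_apply_of_add_lt hstep e i j (by omega), hstep]
    rfl

theorem iterate_eq_of_carry [NeZero d] (g : E → E)
    (hstep : ∀ e (i : Fin d) (h : i.val + 1 < d), f (e, i) = (e, ⟨i + 1, h⟩))
    (hcarry : ∀ e (i : Fin d), i.val + 1 = d → f (e, i) = (g e, 0)) (e : E) (i : Fin d) :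
    f^[d] (e, i) = (g e, i) := by
  obtain ⟨k, hk⟩ := Nat.exists_eq_add_of_lt i.isLt
  calc f^[d] (e, i) = f^[i] (f (f^[k] (e, i))) := by
        rw [congrArg (f^[·]) (hk.trans (Nat.add_assoc _ _ _)), iterate_add_apply,
          iterate_succ_apply']
    _ = f^[i] (g e, 0) := by
        rw [iterate_apply_of_add_lt hstep e i k (by omega), hcarry _ _ (by simp; omega)]
    _ = (g e, i) := by
        rw [iterate_apply_of_add_lt hstep (g e) 0 i (by simp)]
        simp

end Carry

section Rotate

open Fin.NatCast

variable (α : Type*) (d : ℕ) [NeZero d]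

def rotate : α × Fin d → α × Fin d :=
  Prod.map id (· + 1)

variable {α d}

theorem rotate_iterate_apply (j : ℕ) (x : α) (i : Fin d) :
    (rotate α d)^[j] (x, i) = (x, i + j) := by
  simp [rotate, add_right_iterate]

theorem rotate_iterate_self : (rotate α d)^[d] = id :=
  funext fun ⟨x, i⟩ => by simp [rotate_iterate_apply]

theorem rotate_iterate_ne_id [Nonempty α] {j : ℕ} (hj : 0 < j) (hjd : j < d) :
    (rotate α d)^[j] ≠ id := by
  intro h
  obtain ⟨x⟩ := ‹Nonempty α›
  have hj0 : (j : Fin d) = 0 := by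
    simpa [rotate_iterate_apply] using congrFun h (x, 0)
  exact hj.ne' (Nat.eq_zero_of_dvd_of_lt (Fin.natCast_eq_zero.1 hj0) hjd)

theorem exists_rotate_iterate_eq_iff {p q : α × Fin d} :
    (∃ j, (rotate α d)^[j] p = q) ↔ p.1 = q.1 := by
  obtain ⟨x, i⟩ := p
  obtain ⟨y, k⟩ := q
  simp only [rotate_iterate_apply, Prod.mk.injEq]
  refine ⟨fun ⟨_, h, _⟩ => h, fun h => ⟨(k - i).val, h, ?_⟩⟩
  rw [Fin.cast_val_eq_self, add_sub_cancel]

end Rotate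

namespace BrauerTreeC

variable (T : BrauerTreeC) (d : ℕ)

/-- The vertex type of `T.Unfold d`, named so that it can be used without `[NeZero d]`. -/
abbrev UnfoldVtx : Type :=
  Option ({v // v ≠ T.exc} × Fin d)

def quotVtx : T.UnfoldVtx d → T.Vtx :=
  fun x => Option.elim x T.exc fun p => p.1

open Classical in
noncomputable def liftVtx (v : T.Vtx) (i : Fin d) : T.UnfoldVtx d :=
  if h : v = T.exc then none else some (⟨v, h⟩, i)

theorem quotVtx_liftVtx (v : T.Vtx) (i : Fin d) : T.quotVtx d (T.liftVtx d v i) = v := by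
  unfold liftVtx
  split_ifs with h
  · exact h.symm
  · rfl

variable [NeZero d]

def rotateVtx : T.UnfoldVtx d → T.UnfoldVtx d :=
  Option.map (rotate _ d)

theorem rotateVtx_liftVtx (v : T.Vtx) (i : Fin d) :
    T.rotateVtx d (T.liftVtx d v i) = T.liftVtx d v (i + 1) := by
  unfold liftVtx
  split_ifs <;> rfl

theorem unfold_ends (e : T.Edge) (i : Fin d) :
    (T.Unfold d).ends (e, i) = (T.liftVtx d (T.ends e).1 i, T.liftVtx d (T.ends e).2 i) :=
  rfl

theorem ends_rotate (x : (T.Unfold d).Edge) :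
    (T.Unfold d).ends (rotate _ d x) =
      (T.rotateVtx d ((T.Unfold d).ends x).1, T.rotateVtx d ((T.Unfold d).ends x).2) := by
  obtain ⟨e, i⟩ := x
  change (T.Unfold d).ends (e, i + 1) = _
  rw [unfold_ends, unfold_ends, rotateVtx_liftVtx, rotateVtx_liftVtx]

theorem ends_quot (x : (T.Unfold d).Edge) :
    T.ends x.1 = (T.quotVtx d ((T.Unfold d).ends x).1, T.quotVtx d ((T.Unfold d).ends x).2) := by
  obtain ⟨e, i⟩ := x
  rw [unfold_ends, quotVtx_liftVtx, quotVtx_liftVtx]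

theorem rotateVtx_iterate_self : (T.rotateVtx d)^[d] = id := by
  rw [rotateVtx, Option.map_iterate, rotate_iterate_self, Option.map_id]

theorem quotVtx_surjective : Surjective (T.quotVtx d) :=
  fun v => ⟨T.liftVtx d v 0, T.quotVtx_liftVtx d v 0⟩

theorem quotVtx_eq_iff (x y : T.UnfoldVtx d) :
    T.quotVtx d x = T.quotVtx d y ↔ ∃ j, (T.rotateVtx d)^[j] x = y := by
  simp only [rotateVtx, Option.map_iterate]
  rcases x with _ | p <;> rcases y with _ | q
  · simp [quotVtx]
  · simp [quotVtx, q.1.2.symm]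
  · simp [quotVtx, p.1.2]
  · simp [quotVtx, exists_rotate_iterate_eq_iff, Subtype.ext_iff]

theorem succ_exc_iterate (e : T.Edge) (i : Fin d) :
    ((T.Unfold d).succ (T.Unfold d).exc)^[d] (e, i) = (T.succ T.exc e, i) := by
  refine iterate_eq_of_carry _ (fun e i h => ?_) (fun e i h => ?_) e i
  · change (if (i : ℕ) + 1 < d then (e, i + 1) else (T.succ T.exc e, 0)) = _
    rw [if_pos h, Prod.ext_iff]
    exact ⟨rfl, Fin.ext (Fin.val_add_one_of_lt' h)⟩
  · change (if (i : ℕ) + 1 < d then (e, i + 1) else (T.succ T.exc e, 0)) = _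
    rw [if_neg (not_lt.2 h.ge)]

end BrauerTreeC

theorem stmt8_general (T : BrauerTreeC) (d : ℕ) [NeZero d]
    (hE : Nonempty T.Edge) :
    ∃ (σV : (T.Unfold d).Vtx → (T.Unfold d).Vtx)
      (σE : (T.Unfold d).Edge → (T.Unfold d).Edge),
      Function.Bijective σV ∧ Function.Bijective σE ∧
      -- σ is a graph automorphism:
      (∀ e : (T.Unfold d).Edge, (T.Unfold d).ends (σE e) =
        (σV ((T.Unfold d).ends e).1, σV ((T.Unfold d).ends e).2)) ∧
      -- fixing the exceptional vertex and permuting the copies cyclically: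
      σV (T.Unfold d).exc = (T.Unfold d).exc ∧
      (∀ p : {v : T.Vtx // v ≠ T.exc} × Fin d, σV (some p) = some (p.1, p.2 + 1)) ∧
      (∀ (e : T.Edge) (i : Fin d), σE (e, i) = (e, i + 1)) ∧
      -- σ preserves the planar structure at the non-exceptional vertices:
      (∀ (p : {v : T.Vtx // v ≠ T.exc} × Fin d) (e : (T.Unfold d).Edge),
        (T.Unfold d).succ (σV (some p)) (σE e) = σE ((T.Unfold d).succ (some p) e)) ∧
      -- σ has order exactly d:
      σE^[d] = id ∧ σV^[d] = id ∧ (∀ j : ℕ, 0 < j → j < d → σE^[j] ≠ id) ∧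
      -- the quotient by ⟨σ⟩ is T:
      ∃ (qV : (T.Unfold d).Vtx → T.Vtx) (qE : (T.Unfold d).Edge → T.Edge),
        Function.Surjective qV ∧ Function.Surjective qE ∧
        (∀ x y : (T.Unfold d).Vtx, qV x = qV y ↔ ∃ j : ℕ, σV^[j] x = y) ∧
        (∀ x y : (T.Unfold d).Edge, qE x = qE y ↔ ∃ j : ℕ, σE^[j] x = y) ∧
        qV (T.Unfold d).exc = T.exc ∧
        (∀ e : (T.Unfold d).Edge, T.ends (qE e) =
          (qV ((T.Unfold d).ends e).1, qV ((T.Unfold d).ends e).2)) ∧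
        (∀ (p : {v : T.Vtx // v ≠ T.exc} × Fin d) (e : (T.Unfold d).Edge),
          qE ((T.Unfold d).succ (some p) e) = T.succ (p.1 : T.Vtx) (qE e)) ∧
        (∀ (e : T.Edge) (i : Fin d),
          ((T.Unfold d).succ (T.Unfold d).exc)^[d] (e, i) = (T.succ T.exc e, i)) ∧
        (T.Unfold d).mult = T.mult / d := by
  have hσV := T.rotateVtx_iterate_self d
  have hσE : (rotate T.Edge d)^[d] = id := rotate_iterate_self
  exact ⟨T.rotateVtx d, rotate T.Edge d,
    bijective_of_iterate_eq_id (NeZero.ne d) hσV, bijective_of_iterate_eq_id (NeZero.ne d) hσE,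
    T.ends_rotate d, rfl, fun _ => rfl, fun _ _ => rfl, fun _ _ => rfl,
    hσE, hσV, fun _ => rotate_iterate_ne_id,
    T.quotVtx d, Prod.fst, T.quotVtx_surjective d, Prod.fst_surjective,
    T.quotVtx_eq_iff d, fun _ _ => exists_rotate_iterate_eq_iff.symm,
    rfl, T.ends_quot d, fun _ _ => rfl, T.succ_exc_iterate d, rfl⟩

/-- Let `T` be a Brauer tree with multiplicity `m` and let `d > 1` divide
`m`.  The unfolded tree `∧^d T` carries an automorphism `σ` of order `d` fixing the
exceptional vertex and permuting the `d` copies of `T ∖ {v_x}` cyclically, and the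
quotient of `∧^d T` by `⟨σ⟩` is isomorphic to `T` as a planar tree with exceptional
vertex (the quotient maps `qV, qE` have the `σ`-orbits as fibres, commute with
incidence, preserve the cyclic orderings at non-exceptional vertices, and collapse the
cyclic ordering at the exceptional vertex `d`-fold onto that of `T`). -/
theorem stmt8 (T : BrauerTreeC) (d : ℕ) [NeZero d] (hd : 1 < d) (hdvd : d ∣ T.mult)
    (hE : Nonempty T.Edge) :
    ∃ (σV : (T.Unfold d).Vtx → (T.Unfold d).Vtx)
      (σE : (T.Unfold d).Edge → (T.Unfold d).Edge),
      Function.Bijective σV ∧ Function.Bijective σE ∧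
      -- σ is a graph automorphism:
      (∀ e : (T.Unfold d).Edge, (T.Unfold d).ends (σE e) =
        (σV ((T.Unfold d).ends e).1, σV ((T.Unfold d).ends e).2)) ∧
      -- fixing the exceptional vertex and permuting the copies cyclically:
      σV (T.Unfold d).exc = (T.Unfold d).exc ∧
      (∀ p : {v : T.Vtx // v ≠ T.exc} × Fin d, σV (some p) = some (p.1, p.2 + 1)) ∧
      (∀ (e : T.Edge) (i : Fin d), σE (e, i) = (e, i + 1)) ∧
      -- σ preserves the planar structure at the non-exceptional vertices:
      (∀ (p : {v : T.Vtx // v ≠ T.exc} × Fin d) (e : (T.Unfold d).Edge),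
        (T.Unfold d).succ (σV (some p)) (σE e) = σE ((T.Unfold d).succ (some p) e)) ∧
      -- σ has order exactly d:
      σE^[d] = id ∧ σV^[d] = id ∧ (∀ j : ℕ, 0 < j → j < d → σE^[j] ≠ id) ∧
      -- the quotient by ⟨σ⟩ is T:
      ∃ (qV : (T.Unfold d).Vtx → T.Vtx) (qE : (T.Unfold d).Edge → T.Edge),
        Function.Surjective qV ∧ Function.Surjective qE ∧
        (∀ x y : (T.Unfold d).Vtx, qV x = qV y ↔ ∃ j : ℕ, σV^[j] x = y) ∧
        (∀ x y : (T.Unfold d).Edge, qE x = qE y ↔ ∃ j : ℕ, σE^[j] x = y) ∧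
        qV (T.Unfold d).exc = T.exc ∧
        (∀ e : (T.Unfold d).Edge, T.ends (qE e) =
          (qV ((T.Unfold d).ends e).1, qV ((T.Unfold d).ends e).2)) ∧
        (∀ (p : {v : T.Vtx // v ≠ T.exc} × Fin d) (e : (T.Unfold d).Edge),
          qE ((T.Unfold d).succ (some p) e) = T.succ (p.1 : T.Vtx) (qE e)) ∧
        (∀ (e : T.Edge) (i : Fin d),
          ((T.Unfold d).succ (T.Unfold d).exc)^[d] (e, i) = (T.succ T.exc e, i)) ∧
        (T.Unfold d).mult = T.mult / d :=
  stmt8_general T d hE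
end
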